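/- arXiv:1305.6503 — 3 statements merged into one kernel-verified Lean document; each statement's English description precedes it below -/
import Mathlib

section
/- Let n ≥ 2 and let G be the group presented with generators x₁, …, xₙ and the single cyclic relation of length n: xₙ x_{n-1} ⋯ x₁ = x_{n-1} ⋯ x₁ xₙ = ⋯ = x₁ xₙ ⋯ x₂ (equivalently, with relators ⁅x_k, x_{k-1} ⋯ x₁ xₙ ⋯ x_{k+1}⁆ for 1 ≤ k ≤ n). Then G is isomorphic to the direct product F_{n-1} × ℤ, where F_{n-1} is the free group of rank n−1. -/
open scoped commutatorElement

/-- The relators `⁅x_k, x_{k-1} ⋯ x₁ x_n ⋯ x_{k+1}⁆` (for `1 ≤ k ≤ n`) encoding the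
single cyclic relation of length `n`:
`x_n x_{n-1} ⋯ x₁ = x_{n-1} ⋯ x₁ x_n = ⋯ = x₁ x_n ⋯ x₂`
on the generators `x₁, …, x_n` of the free group on `Fin n`. The descending list of
indices `[x_n, …, x₁]` is `(List.finRange n).reverse`, and its rotations produce all
the words `x_k x_{k-1} ⋯ x₁ x_n ⋯ x_{k+1}`. -/
def cyclicRelators (n : ℕ) : Set (FreeGroup (Fin n)) :=
  { w | ∃ i < n, ∃ (x : Fin n) (xs : List (Fin n)),
      (List.finRange n).reverse.rotate i = x :: xs ∧
      w = ⁅FreeGroup.of x, (xs.map FreeGroup.of).prod⁆ }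

namespace CyclicRelatorsAux

/-- in a group, if the product of a list commutes with everything, so does the
product of any rotation, and it is equal to the original product -/
lemma prod_rotate_of_comm {G : Type*} [Group G] {l : List G}
    (h : ∀ g, g * l.prod = l.prod * g) (i : ℕ) : (l.rotate i).prod = l.prod := by
  rcases eq_or_ne l [] with rfl | hl
  · simp
  have hlen : 0 < l.length := List.length_pos_iff.mpr hl
  rw [← List.rotate_mod, List.rotate_eq_drop_append_take (Nat.mod_lt _ hlen).le,
    List.prod_append]
  set j := i % l.length with hj
  have hl2 : (l.take j).prod * (l.drop j).prod = l.prod := by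
    rw [← List.prod_append, List.take_append_drop]
  have h2 := h (l.take j).prod
  rw [← hl2] at h2
  have h4 : (l.take j).prod * ((l.take j).prod * (l.drop j).prod)
      = (l.take j).prod * ((l.drop j).prod * (l.take j).prod) := by
    rw [h2]; rw [mul_assoc]
  have h5 := mul_left_cancel h4
  rw [← hl2, ← h5]

variable (m : ℕ)

/-- the descending word `y_{m-1} ⋯ y_0` in the free group on `Fin m` -/
def ww : FreeGroup (Fin m) := (((List.finRange m).reverse).map FreeGroup.of).prod

/-- the map sending generator 0 to `(ww⁻¹, 1)` and generator `j+1` to `(y_j, 0)` -/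
def ff : Fin (m + 1) → FreeGroup (Fin m) × Multiplicative ℤ :=
  Fin.cases ((ww m)⁻¹, Multiplicative.ofAdd 1) (fun j => (FreeGroup.of j, 1))

lemma list_decomp :
    (List.finRange (m + 1)).reverse
      = ((List.finRange m).reverse.map Fin.succ) ++ [(0 : Fin (m+1))] := by
  rw [List.finRange_succ, List.reverse_cons, List.map_reverse]

lemma prod_map_ff :
    (((List.finRange (m+1)).reverse).map (ff m)).prod
      = ((1 : FreeGroup (Fin m)), Multiplicative.ofAdd 1) := by
  rw [list_decomp, List.map_append, List.prod_append, List.map_map]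
  have h1 : (ff m ∘ Fin.succ)
      = fun j : Fin m => ((FreeGroup.of j : FreeGroup (Fin m)), (1 : Multiplicative ℤ)) := by
    funext j; simp [ff]
  have h2 : ((List.finRange m).reverse.map
        (fun j : Fin m => ((FreeGroup.of j : FreeGroup (Fin m)), (1 : Multiplicative ℤ)))).prod
      = (ww m, (1 : Multiplicative ℤ)) := by
    have h3 := map_list_prod (MonoidHom.inl (FreeGroup (Fin m)) (Multiplicative ℤ))
      (((List.finRange m).reverse).map FreeGroup.of)
    rw [List.map_map] at h3
    simpa [ww, Function.comp_def] using h3.symm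
  rw [h1, h2]
  simp [ff, Prod.ext_iff]

lemma central_aux (g : FreeGroup (Fin m) × Multiplicative ℤ) :
    g * ((1 : FreeGroup (Fin m)), Multiplicative.ofAdd 1)
      = (((1 : FreeGroup (Fin m)), Multiplicative.ofAdd 1)) * g := by
  obtain ⟨a, b⟩ := g
  simp [Prod.ext_iff, mul_comm]

lemma hlift : ∀ r ∈ cyclicRelators (m+1), FreeGroup.lift (ff m) r = 1 := by
  rintro r ⟨i, hi, x, xs, hrot, rfl⟩
  rw [map_commutatorElement, commutatorElement_eq_one_iff_commute]
  have hx : FreeGroup.lift (ff m) (FreeGroup.of x) = ff m x := FreeGroup.lift_apply_of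
  have hxs : FreeGroup.lift (ff m) ((xs.map FreeGroup.of)).prod = (xs.map (ff m)).prod := by
    rw [map_list_prod, List.map_map]
    congr 1
    apply List.map_congr_left
    intro a _
    exact FreeGroup.lift_apply_of
  have hcentral : ∀ g, g * (((List.finRange (m+1)).reverse).map (ff m)).prod
      = (((List.finRange (m+1)).reverse).map (ff m)).prod * g := by
    rw [prod_map_ff]; exact central_aux m
  have hc : ff m x * (xs.map (ff m)).prod
      = ((1 : FreeGroup (Fin m)), Multiplicative.ofAdd 1) := by
    have h1 : ((((List.finRange (m+1)).reverse).rotate i).map (ff m)).prod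
        = ((1 : FreeGroup (Fin m)), Multiplicative.ofAdd 1) := by
      rw [List.map_rotate, prod_rotate_of_comm hcentral, prod_map_ff]
    rw [hrot] at h1
    simpa using h1
  rw [hx, hxs]
  have hb : (xs.map (ff m)).prod
      = (ff m x)⁻¹ * ((1 : FreeGroup (Fin m)), Multiplicative.ofAdd 1) := by
    rw [← hc]; group
  rw [hb]
  exact ((Commute.refl (ff m x)).inv_right).mul_right (central_aux m (ff m x))

/-- image of the full cyclic word in the presented group -/
def zeta : PresentedGroup (cyclicRelators (m+1)) :=
  (((List.finRange (m+1)).reverse).map PresentedGroup.of).prod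

lemma commute_head (i : ℕ) (hi : i < m + 1) (x : Fin (m+1)) (xs : List (Fin (m+1)))
    (hxxs : ((List.finRange (m+1)).reverse).rotate i = x :: xs) :
    Commute (PresentedGroup.of (rels := cyclicRelators (m+1)) x)
      ((xs.map PresentedGroup.of).prod) := by
  have hrel : ⁅FreeGroup.of x, (xs.map FreeGroup.of).prod⁆ ∈ cyclicRelators (m+1) :=
    ⟨i, hi, x, xs, hxxs, rfl⟩
  have h1 : (PresentedGroup.mk (cyclicRelators (m+1)))
      ⁅FreeGroup.of x, (xs.map FreeGroup.of).prod⁆ = 1 :=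
    (QuotientGroup.eq_one_iff _).mpr (Subgroup.subset_normalClosure hrel)
  rw [map_commutatorElement] at h1
  have h2 : (PresentedGroup.mk (cyclicRelators (m+1))) ((xs.map FreeGroup.of).prod)
      = (xs.map PresentedGroup.of).prod := by
    rw [map_list_prod, List.map_map]; rfl
  rw [h2] at h1
  exact commutatorElement_eq_one_iff_commute.mp h1

lemma rot_prod_eq (i : ℕ) :
    ((((List.finRange (m+1)).reverse).rotate i).map PresentedGroup.of).prod = zeta m := by
  induction i with
  | zero => simp [zeta]
  | succ i ih =>
    obtain ⟨x, xs, hxxs⟩ : ∃ x xs, ((List.finRange (m+1)).reverse).rotate i = x :: xs := by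
      cases h : ((List.finRange (m+1)).reverse).rotate i with
      | nil =>
        exfalso
        have := congrArg List.length h
        simp at this
      | cons a l => exact ⟨a, l, rfl⟩
    have hlen : ((List.finRange (m+1)).reverse).length = m + 1 := by simp
    have hmod : ((List.finRange (m+1)).reverse).rotate (i % (m+1)) = x :: xs := by
      have hrm := List.rotate_mod ((List.finRange (m+1)).reverse) i
      rw [hlen] at hrm
      rw [hrm]
      exact hxxs
    have hcomm := commute_head m (i % (m+1)) (Nat.mod_lt _ m.succ_pos) x xs hmod
    have e1 : ((List.finRange (m+1)).reverse).rotate (i+1) = xs ++ [x] := by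
      rw [← List.rotate_rotate, hxxs, List.rotate_cons_succ, List.rotate_zero]
    rw [e1, List.map_append, List.prod_append, List.map_singleton, List.prod_singleton,
      hcomm.symm.eq, ← List.prod_cons, ← List.map_cons, ← hxxs, ih]

lemma commute_of_zeta (k : Fin (m+1)) :
    Commute (PresentedGroup.of (rels := cyclicRelators (m+1)) k) (zeta m) := by
  have hk : k ∈ (List.finRange (m+1)).reverse := by simp
  obtain ⟨j, hj, hjk⟩ := List.mem_iff_getElem.mp hk
  have hrot : ((List.finRange (m+1)).reverse).rotate j
      = k :: (((List.finRange (m+1)).reverse).drop (j+1)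
          ++ ((List.finRange (m+1)).reverse).take j) := by
    rw [List.rotate_eq_drop_append_take hj.le, List.drop_eq_getElem_cons hj, hjk,
      List.cons_append]
  have hj' : j < m + 1 := by simpa using hj
  have hcomm := commute_head m j hj' k _ hrot
  have hz : zeta m = PresentedGroup.of k
      * (((((List.finRange (m+1)).reverse).drop (j+1)
          ++ ((List.finRange (m+1)).reverse).take j)).map PresentedGroup.of).prod := by
    rw [← rot_prod_eq m j, hrot, List.map_cons, List.prod_cons]
  rw [hz]
  exact (Commute.refl _).mul_right hcomm

/-- the free part of the inverse map -/
def psi1 : FreeGroup (Fin m) →* PresentedGroup (cyclicRelators (m+1)) :=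
  FreeGroup.lift (fun j => PresentedGroup.of (Fin.succ j))

lemma commute_psi1_zeta (a : FreeGroup (Fin m)) : Commute (psi1 m a) (zeta m) := by
  induction a using FreeGroup.induction_on with
  | C1 => simp [Commute.one_left]
  | of x =>
    have : psi1 m (FreeGroup.of x) = PresentedGroup.of (Fin.succ x) := FreeGroup.lift_apply_of
    rw [this]
    exact commute_of_zeta m (Fin.succ x)
  | inv_of x ih =>
    rw [map_inv]
    exact ih.inv_left
  | mul x y ihx ihy =>
    rw [map_mul]
    exact ihx.mul_left ihy

/-- the inverse map -/
def psi : FreeGroup (Fin m) × Multiplicative ℤ →* PresentedGroup (cyclicRelators (m+1)) :=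
  (psi1 m).noncommCoprod (zpowersHom _ (zeta m))
    (fun a b => by
      rw [zpowersHom_apply]
      exact (commute_psi1_zeta m a).zpow_right _)

/-- the forward map -/
def phi : PresentedGroup (cyclicRelators (m+1)) →* FreeGroup (Fin m) × Multiplicative ℤ :=
  PresentedGroup.toGroup (hlift m)

lemma psi1_ww : psi1 m (ww m)
    = (((List.finRange m).reverse).map (fun j => PresentedGroup.of
        (rels := cyclicRelators (m+1)) (Fin.succ j))).prod := by
  rw [ww, map_list_prod, List.map_map]
  congr 1

lemma zeta_decomp : zeta m
    = (((List.finRange m).reverse).map (fun j => PresentedGroup.of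
        (rels := cyclicRelators (m+1)) (Fin.succ j))).prod * PresentedGroup.of 0 := by
  rw [zeta, list_decomp, List.map_append, List.prod_append, List.map_map,
    List.map_singleton, List.prod_singleton]
  rfl

lemma psi_comp_phi : (psi m).comp (phi m) = MonoidHom.id _ := by
  apply PresentedGroup.ext
  intro x
  rw [MonoidHom.comp_apply, MonoidHom.id_apply]
  have hphi : phi m (PresentedGroup.of x) = ff m x := PresentedGroup.toGroup.of (hlift m)
  rw [hphi]
  induction x using Fin.cases with
  | zero =>
    rw [show ff m 0 = ((ww m)⁻¹, Multiplicative.ofAdd 1) from rfl]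
    rw [psi, MonoidHom.noncommCoprod_apply]
    rw [map_inv, psi1_ww, zpowersHom_apply]
    rw [show (Multiplicative.toAdd (Multiplicative.ofAdd (1 : ℤ))) = 1 from rfl, zpow_one,
      zeta_decomp]
    exact inv_mul_cancel_left _ _
  | succ j =>
    rw [show ff m (Fin.succ j) = (FreeGroup.of j, 1) from rfl]
    rw [psi, MonoidHom.noncommCoprod_apply]
    have h1 : psi1 m (FreeGroup.of j) = PresentedGroup.of (Fin.succ j) := FreeGroup.lift_apply_of
    rw [h1, map_one, mul_one]

lemma phi_zeta : phi m (zeta m) = ((1 : FreeGroup (Fin m)), Multiplicative.ofAdd 1) := by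
  rw [zeta, map_list_prod, List.map_map, ← prod_map_ff]
  congr 1
  apply List.map_congr_left
  intro a _
  exact PresentedGroup.toGroup.of (hlift m)

lemma phi_comp_psi : (phi m).comp (psi m) = MonoidHom.id _ := by
  have h1 : ∀ a : FreeGroup (Fin m), (phi m) ((psi m) (a, 1)) = (a, 1) := by
    intro a
    have : ((phi m).comp (psi m)).comp
          (MonoidHom.inl (FreeGroup (Fin m)) (Multiplicative ℤ))
        = MonoidHom.inl (FreeGroup (Fin m)) (Multiplicative ℤ) := by
      apply FreeGroup.ext_hom
      intro j
      simp only [MonoidHom.comp_apply, MonoidHom.inl_apply]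
      rw [psi, MonoidHom.noncommCoprod_apply]
      have hp : psi1 m (FreeGroup.of j) = PresentedGroup.of (Fin.succ j) := FreeGroup.lift_apply_of
      rw [hp, map_one, mul_one]
      have := PresentedGroup.toGroup.of (hlift m) (x := Fin.succ j)
      rw [show phi m (PresentedGroup.of (Fin.succ j)) = ff m (Fin.succ j) from this]
      rfl
    have := congrArg (fun f => f a) this
    simpa using this
  have h2 : ∀ b : Multiplicative ℤ, (phi m) ((psi m) (1, b)) = (1, b) := by
    intro b
    rw [psi, MonoidHom.noncommCoprod_apply, map_one, one_mul, zpowersHom_apply,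
      map_zpow, phi_zeta]
    rw [Prod.pow_def]
    simp only [one_zpow]
    congr 1
    rw [← ofAdd_zsmul]
    simp
  apply MonoidHom.ext
  rintro ⟨a, b⟩
  have : ((a, b) : FreeGroup (Fin m) × Multiplicative ℤ) = (a, 1) * (1, b) := by
    simp [Prod.ext_iff]
  rw [MonoidHom.comp_apply, MonoidHom.id_apply, this, map_mul, map_mul, h1, h2]

/-- the desired isomorphism, for `n = m + 1` -/
def theIso : PresentedGroup (cyclicRelators (m+1)) ≃*
    FreeGroup (Fin m) × Multiplicative ℤ :=
  MonoidHom.toMulEquiv (phi m) (psi m) (psi_comp_phi m) (phi_comp_psi m)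

end CyclicRelatorsAux

/-- The group presented by `n` generators subject to the single cyclic relation of
length `n` is isomorphic to the direct product of the free group of rank `n - 1`
with `ℤ`. -/
theorem presented_cyclic_iso_free_prod_int (n : ℕ) (hn : 2 ≤ n) :
    Nonempty (PresentedGroup (cyclicRelators n) ≃*
      FreeGroup (Fin (n - 1)) × Multiplicative ℤ) := by
  obtain ⟨m, rfl⟩ : ∃ m, n = m + 1 := ⟨n - 1, by omega⟩
  exact ⟨CyclicRelatorsAux.theIso m⟩
end

section
/- Let X and Y be disjoint sets, let R be a set of elements of the free group on X and S a set of elements of the free group on Y, both regarded inside the free group on X ⊔ Y, and let T = {⁅x, y⁆ : x ∈ X, y ∈ Y}. Then the group presented on generators X ⊔ Y with relators R ∪ S ∪ T is isomorphic to the direct product of the group presented on X with relators R and the group presented on Y with relators S. -/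
open scoped commutatorElement

section Aux

variable {X Y : Type*} (R : Set (FreeGroup X)) (S : Set (FreeGroup Y))

private abbrev sumRels : Set (FreeGroup (X ⊕ Y)) :=
  (FreeGroup.map Sum.inl '' R : Set (FreeGroup (X ⊕ Y))) ∪
    (FreeGroup.map Sum.inr '' S) ∪
    { w | ∃ (x : X) (y : Y),
      w = ⁅(FreeGroup.of (Sum.inl x) : FreeGroup (X ⊕ Y)),
            FreeGroup.of (Sum.inr y)⁆ }

private theorem mk_eq_one {α : Type*} {rels : Set (FreeGroup α)} {w : FreeGroup α}
    (hw : w ∈ rels) : PresentedGroup.mk rels w = 1 := by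
  have : w ∈ Subgroup.normalClosure rels := Subgroup.subset_normalClosure hw
  exact (QuotientGroup.eq_one_iff w).2 this

private theorem phi_rels (r : FreeGroup (X ⊕ Y)) (hr : r ∈ sumRels R S) :
    FreeGroup.lift (Sum.elim
      (fun x => ((PresentedGroup.of x : PresentedGroup R), (1 : PresentedGroup S)))
      (fun y => ((1 : PresentedGroup R), (PresentedGroup.of y : PresentedGroup S)))) r = 1 := by
  rcases hr with (⟨r', hr', rfl⟩ | ⟨s', hs', rfl⟩) | ⟨x, y, rfl⟩
  · have key : (FreeGroup.lift (Sum.elim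
        (fun x => ((PresentedGroup.of x : PresentedGroup R), (1 : PresentedGroup S)))
        (fun y => ((1 : PresentedGroup R), (PresentedGroup.of y : PresentedGroup S))))).comp
          (FreeGroup.map Sum.inl) =
        (MonoidHom.inl (PresentedGroup R) (PresentedGroup S)).comp (PresentedGroup.mk R) := by
      refine FreeGroup.ext_hom _ _ fun x => ?_
      refine Prod.ext ?_ ?_ <;>
        (simp only [MonoidHom.comp_apply, FreeGroup.map.of, FreeGroup.lift_apply_of,
            Sum.elim_inl, Sum.elim_inr, MonoidHom.inl_apply, MonoidHom.inr_apply];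
          try rfl)
    calc FreeGroup.lift _ (FreeGroup.map Sum.inl r')
        = ((MonoidHom.inl (PresentedGroup R) (PresentedGroup S)).comp
            (PresentedGroup.mk R)) r' := by rw [← key]; rfl
      _ = 1 := by simp [mk_eq_one hr']
  · have key : (FreeGroup.lift (Sum.elim
        (fun x => ((PresentedGroup.of x : PresentedGroup R), (1 : PresentedGroup S)))
        (fun y => ((1 : PresentedGroup R), (PresentedGroup.of y : PresentedGroup S))))).comp
          (FreeGroup.map Sum.inr) =
        (MonoidHom.inr (PresentedGroup R) (PresentedGroup S)).comp (PresentedGroup.mk S) := by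
      refine FreeGroup.ext_hom _ _ fun y => ?_
      refine Prod.ext ?_ ?_ <;>
        (simp only [MonoidHom.comp_apply, FreeGroup.map.of, FreeGroup.lift_apply_of,
            Sum.elim_inl, Sum.elim_inr, MonoidHom.inl_apply, MonoidHom.inr_apply];
          try rfl)
    calc FreeGroup.lift _ (FreeGroup.map Sum.inr s')
        = ((MonoidHom.inr (PresentedGroup R) (PresentedGroup S)).comp
            (PresentedGroup.mk S)) s' := by rw [← key]; rfl
      _ = 1 := by simp [mk_eq_one hs']
  · rw [map_commutatorElement]
    simp only [FreeGroup.lift_apply_of, Sum.elim_inl, Sum.elim_inr]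
    ext <;> simp [commutatorElement_def]

private theorem psi1_rels (r : FreeGroup X) (hr : r ∈ R) :
    FreeGroup.lift (fun x => (PresentedGroup.of (Sum.inl x) : PresentedGroup (sumRels R S))) r
      = 1 := by
  have key : (FreeGroup.lift
      (fun x => (PresentedGroup.of (Sum.inl x) : PresentedGroup (sumRels R S)))) =
      (PresentedGroup.mk (sumRels R S)).comp (FreeGroup.map Sum.inl) := by
    ext x; simp [PresentedGroup.of, PresentedGroup.mk]
  rw [key]
  exact mk_eq_one (Or.inl (Or.inl ⟨r, hr, rfl⟩))

private theorem psi2_rels (s : FreeGroup Y) (hs : s ∈ S) :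
    FreeGroup.lift (fun y => (PresentedGroup.of (Sum.inr y) : PresentedGroup (sumRels R S))) s
      = 1 := by
  have key : (FreeGroup.lift
      (fun y => (PresentedGroup.of (Sum.inr y) : PresentedGroup (sumRels R S)))) =
      (PresentedGroup.mk (sumRels R S)).comp (FreeGroup.map Sum.inr) := by
    ext y; simp [PresentedGroup.of, PresentedGroup.mk]
  rw [key]
  exact mk_eq_one (Or.inl (Or.inr ⟨s, hs, rfl⟩))

end Aux

/-- If `R` is a set of relators on the generators `X`, `S` a set of relators on the
disjoint generators `Y`, and one adds all the commutators `⁅x, y⁆` for `x ∈ X`,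
`y ∈ Y`, then the resulting presented group on `X ⊔ Y` is the direct product of the
group presented on `X` by `R` with the group presented on `Y` by `S`. -/
theorem presentedGroup_sum_commuting_iso_prod {X Y : Type*}
    (R : Set (FreeGroup X)) (S : Set (FreeGroup Y)) :
    Nonempty (PresentedGroup
        ((FreeGroup.map Sum.inl '' R : Set (FreeGroup (X ⊕ Y))) ∪
          (FreeGroup.map Sum.inr '' S) ∪
          { w | ∃ (x : X) (y : Y),
            w = ⁅(FreeGroup.of (Sum.inl x) : FreeGroup (X ⊕ Y)),
                  FreeGroup.of (Sum.inr y)⁆ }) ≃*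
      PresentedGroup R × PresentedGroup S) := by
  set T := sumRels R S with hT
  -- the forward map
  let φ : PresentedGroup T →* PresentedGroup R × PresentedGroup S :=
    PresentedGroup.toGroup (phi_rels R S)
  -- the two legs of the backward map
  let ψ₁ : PresentedGroup R →* PresentedGroup T :=
    PresentedGroup.toGroup (psi1_rels R S)
  let ψ₂ : PresentedGroup S →* PresentedGroup T :=
    PresentedGroup.toGroup (psi2_rels R S)
  have comm_gen : ∀ (x : X) (y : Y),
      Commute (PresentedGroup.of (Sum.inl x) : PresentedGroup T)
        (PresentedGroup.of (Sum.inr y)) := by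
    intro x y
    have h1 : PresentedGroup.mk T
        ⁅(FreeGroup.of (Sum.inl x) : FreeGroup (X ⊕ Y)), FreeGroup.of (Sum.inr y)⁆ = 1 :=
      mk_eq_one (Or.inr ⟨x, y, rfl⟩)
    rw [map_commutatorElement] at h1
    exact commutatorElement_eq_one_iff_commute.1 h1
  have comm : ∀ a b, Commute (ψ₁ a) (ψ₂ b) := by
    intro a b
    induction a with
    | H w =>
      induction b with
      | H v =>
        have hcw : ∀ w : FreeGroup X, ∀ v : FreeGroup Y,
            Commute (ψ₁ (PresentedGroup.mk R w)) (ψ₂ (PresentedGroup.mk S v)) := by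
          intro w
          induction w using FreeGroup.induction_on with
          | C1 => intro v; simp [Commute.one_left]
          | of x =>
            intro v
            induction v using FreeGroup.induction_on with
            | C1 => simp [Commute.one_right]
            | of y =>
              have h1 : ψ₁ (PresentedGroup.of x) = PresentedGroup.of (Sum.inl x) :=
                PresentedGroup.toGroup.of _
              have h2 : ψ₂ (PresentedGroup.of y) = PresentedGroup.of (Sum.inr y) :=
                PresentedGroup.toGroup.of _
              show Commute (ψ₁ (PresentedGroup.of x)) (ψ₂ (PresentedGroup.of y))
              rw [h1, h2]; exact comm_gen x y
            | inv_of y ih => rw [map_inv, map_inv]; exact ih.inv_right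
            | mul v1 v2 ih1 ih2 => rw [map_mul, map_mul]; exact ih1.mul_right ih2
          | inv_of x ih => intro v; rw [map_inv, map_inv]; exact (ih v).inv_left
          | mul w1 w2 ih1 ih2 =>
            intro v; rw [map_mul, map_mul]; exact (ih1 v).mul_left (ih2 v)
        exact hcw w v
  let ψ : PresentedGroup R × PresentedGroup S →* PresentedGroup T :=
    ψ₁.noncommCoprod ψ₂ comm
  have hφψ₁ : ∀ x : X, φ (PresentedGroup.of (Sum.inl x)) = (PresentedGroup.of x, 1) := by
    intro x; exact PresentedGroup.toGroup.of _
  have hφψ₂ : ∀ y : Y, φ (PresentedGroup.of (Sum.inr y)) = (1, PresentedGroup.of y) := by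
    intro y; exact PresentedGroup.toGroup.of _
  have hψ₁of : ∀ x : X, ψ₁ (PresentedGroup.of x) = PresentedGroup.of (Sum.inl x) := by
    intro x; exact PresentedGroup.toGroup.of _
  have hψ₂of : ∀ y : Y, ψ₂ (PresentedGroup.of y) = PresentedGroup.of (Sum.inr y) := by
    intro y; exact PresentedGroup.toGroup.of _
  have h1 : ψ.comp φ = MonoidHom.id _ := by
    apply PresentedGroup.ext
    intro z
    cases z with
    | inl x =>
      simp only [MonoidHom.comp_apply, MonoidHom.id_apply]
      rw [hφψ₁ x]
      show ψ₁ (PresentedGroup.of x) * ψ₂ 1 = _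
      rw [map_one, mul_one, hψ₁of]
    | inr y =>
      simp only [MonoidHom.comp_apply, MonoidHom.id_apply]
      rw [hφψ₂ y]
      show ψ₁ 1 * ψ₂ (PresentedGroup.of y) = _
      rw [map_one, one_mul, hψ₂of]
  have hcompψ₁ : φ.comp ψ₁ = MonoidHom.inl (PresentedGroup R) (PresentedGroup S) := by
    apply PresentedGroup.ext
    intro x
    simp only [MonoidHom.comp_apply, MonoidHom.inl_apply]
    rw [hψ₁of, hφψ₁]
  have hcompψ₂ : φ.comp ψ₂ = MonoidHom.inr (PresentedGroup R) (PresentedGroup S) := by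
    apply PresentedGroup.ext
    intro y
    simp only [MonoidHom.comp_apply, MonoidHom.inr_apply]
    rw [hψ₂of, hφψ₂]
  have h2 : φ.comp ψ = MonoidHom.id _ := by
    apply MonoidHom.ext
    rintro ⟨a, b⟩
    show φ (ψ₁ a * ψ₂ b) = (a, b)
    rw [map_mul]
    have ha := congrArg (fun f => f a) hcompψ₁
    have hb := congrArg (fun f => f b) hcompψ₂
    simp only [MonoidHom.comp_apply, MonoidHom.inl_apply, MonoidHom.inr_apply] at ha hb
    rw [ha, hb]
    exact Prod.ext (by simp) (by simp)
  exact ⟨MonoidHom.toMulEquiv φ ψ h1 h2⟩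
end

section
/- Fix n ≥ 1 and a family ℬ of subsets of {1,…,n}, each of size at least 2, such that every pair of distinct indices is contained in exactly one member of ℬ. Let G = G(ℬ) be the associated conjugation-free group. Then the rank of G₂/G₃ equals Σ_{B ∈ ℬ} C(|B|−1, 2), i.e. φ₂(G) = Σ_{i ≥ 3} n_i · ω₂(i−1), where n_i is the number of blocks of ℬ of size i and ω₂(m) = m(m−1)/2. -/
open scoped TensorProduct commutatorElement

/-- The `k`-th lower central series quotient `G_k/G_{k+1}` in the paper's (1-based)
indexing: `G_k = (⊤ : Subgroup G).lowerCentralSeries (k-1)`. -/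
def lcsQuot (G : Type*) [Group G] (k : ℕ) :=
  ((⊤ : Subgroup G).lowerCentralSeries (k - 1)) ⧸
    (((⊤ : Subgroup G).lowerCentralSeries k).subgroupOf ((⊤ : Subgroup G).lowerCentralSeries (k - 1)))

noncomputable instance (G : Type*) [Group G] (k : ℕ) : Group (lcsQuot G k) := by
  unfold lcsQuot; infer_instance

/-- `φ_k(G)`: the torsion-free rank of the (finitely generated abelian) group
`G_k/G_{k+1}`, computed as the ℚ-dimension after tensoring with ℚ (the quotient is
abelian, so passing to its abelianization is harmless). -/
noncomputable def phiRank (G : Type*) [Group G] (k : ℕ) : ℕ :=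
  Module.finrank ℚ (ℚ ⊗[ℤ] (Additive (Abelianization (lcsQuot G k))))

/-- The relators of the conjugation-free group `G(ℬ)` associated to a family `ℬ` of
blocks: for each block `b = {i₁ < ⋯ < i_t}` the relators
`⁅x_{i_k}, x_{i_{k-1}} ⋯ x_{i_1} x_{i_t} ⋯ x_{i_{k+1}}⁆`, `1 ≤ k ≤ t`, i.e. the
commutators `⁅x, xs.prod⁆` where `x :: xs` runs over the rotations of the descending
list `[i_t, …, i₁]` of the elements of `b` (encoding the cyclic relation
`x_{i_t} x_{i_{t-1}} ⋯ x_{i_1} = ⋯ = x_{i_1} x_{i_t} ⋯ x_{i_2}`). -/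
def cfRelators {n : ℕ} (B : Finset (Finset (Fin n))) : Set (FreeGroup (Fin n)) :=
  { w | ∃ b ∈ B, ∃ i < b.card, ∃ (x : Fin n) (xs : List (Fin n)),
      (b.sort (· ≤ ·)).reverse.rotate i = x :: xs ∧
      w = ⁅FreeGroup.of x, (xs.map FreeGroup.of).prod⁆ }

open Finset

namespace CFAux

variable (n : ℕ) (B : Finset (Finset (Fin n)))

/-- ordered pairs (i,j), i<j, lying in a common block having an element smaller than i -/
def Spairs : Finset (Fin n × Fin n) :=
  Finset.univ.filter (fun p => p.1 < p.2 ∧ ∃ b ∈ B, p.1 ∈ b ∧ p.2 ∈ b ∧ ∃ m ∈ b, m < p.1)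

lemma mem_Spairs {p : Fin n × Fin n} :
    p ∈ Spairs n B ↔ p.1 < p.2 ∧ ∃ b ∈ B, p.1 ∈ b ∧ p.2 ∈ b ∧ ∃ m ∈ b, m < p.1 := by
  simp [Spairs]

/-- the target coordinate space -/
abbrev Dsp := (↥(Spairs n B)) → ℚ

noncomputable def dl (p : Fin n × Fin n) : Dsp n B :=
  if h : p ∈ Spairs n B then Pi.single (⟨p, h⟩ : ↥(Spairs n B)) 1 else 0

noncomputable def ee (i j : Fin n) : Dsp n B := dl n B (i, j) - dl n B (j, i)

lemma ee_antisymm (i j : Fin n) : ee n B j i = - ee n B i j := by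
  simp [ee]

lemma ee_self (i : Fin n) : ee n B i i = 0 := by simp [ee]

-- the block containing i and j (junk value if not unique)
open Classical in
noncomputable def blk (i j : Fin n) : Finset (Fin n) :=
  if h : ∃! b, b ∈ B ∧ i ∈ b ∧ j ∈ b then h.choose else ∅

noncomputable def cc (i j : Fin n) : Dsp n B :=
  if i = j then 0 else
    ee n B i j
    + (if i ∈ blk n B i j ∧ ∀ m ∈ blk n B i j, ¬ m < i then
        ∑ l ∈ ((blk n B i j).erase i).erase j, ee n B j l else 0)
    - (if j ∈ blk n B i j ∧ ∀ m ∈ blk n B i j, ¬ m < j then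
        ∑ l ∈ ((blk n B i j).erase i).erase j, ee n B i l else 0)

/-- the bilinear cocycle -/
noncomputable def bb (a b : Fin n → ℤ) : Dsp n B :=
  ∑ i, ∑ j, (a i * b j) • cc n B i j

lemma bb_add_left (a a' b : Fin n → ℤ) :
    bb n B (a + a') b = bb n B a b + bb n B a' b := by
  simp [bb, add_mul, add_smul, Finset.sum_add_distrib]

lemma bb_add_right (a b b' : Fin n → ℤ) :
    bb n B a (b + b') = bb n B a b + bb n B a b' := by
  simp [bb, mul_add, add_smul, Finset.sum_add_distrib]

lemma bb_zero_left (b : Fin n → ℤ) : bb n B 0 b = 0 := by simp [bb]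

lemma bb_zero_right (a : Fin n → ℤ) : bb n B a 0 = 0 := by simp [bb]

lemma bb_neg_left (a b : Fin n → ℤ) : bb n B (-a) b = - bb n B a b := by
  simp [bb, neg_smul, Finset.sum_neg_distrib]

lemma bb_single_left (i : Fin n) (b : Fin n → ℤ) :
    bb n B (Pi.single i 1) b = ∑ j, b j • cc n B i j := by
  unfold bb
  rw [Finset.sum_eq_single i]
  · simp [Pi.single_apply]
  · intro k _ hk
    simp [Pi.single_apply, hk]
  · simp

lemma bb_single_right (j : Fin n) (a : Fin n → ℤ) :
    bb n B a (Pi.single j 1) = ∑ i, a i • cc n B i j := by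
  unfold bb
  rw [Finset.sum_comm]
  rw [Finset.sum_eq_single j]
  · simp [Pi.single_apply]
  · intro k _ hk
    simp [Pi.single_apply, hk]
  · simp

/-- the model class-2 nilpotent group -/
structure Hgp where
  fst : Fin n → ℤ
  snd : Dsp n B

namespace Hgp

@[ext] lemma ext' {x y : Hgp n B} (h1 : x.fst = y.fst) (h2 : x.snd = y.snd) : x = y := by
  cases x; cases y; simp_all

noncomputable instance : Group (Hgp n B) where
  mul x y := ⟨x.fst + y.fst, x.snd + y.snd + bb n B x.fst y.fst⟩
  one := ⟨0, 0⟩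
  inv x := ⟨-x.fst, -x.snd + bb n B x.fst x.fst⟩
  mul_assoc x y z := by
    refine ext' n B ?_ ?_
    · show x.fst + y.fst + z.fst = x.fst + (y.fst + z.fst); module
    · show x.snd + y.snd + bb n B x.fst y.fst + z.snd + bb n B (x.fst + y.fst) z.fst
        = x.snd + (y.snd + z.snd + bb n B y.fst z.fst) + bb n B x.fst (y.fst + z.fst)
      rw [bb_add_left, bb_add_right]; abel
  one_mul x := by
    refine ext' n B ?_ ?_
    · show 0 + x.fst = x.fst; simp
    · show 0 + x.snd + bb n B 0 x.fst = x.snd; simp [bb_zero_left]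
  mul_one x := by
    refine ext' n B ?_ ?_
    · show x.fst + 0 = x.fst; simp
    · show x.snd + 0 + bb n B x.fst 0 = x.snd; simp [bb_zero_right]
  inv_mul_cancel x := by
    refine ext' n B ?_ ?_
    · show -x.fst + x.fst = 0; simp
    · show (-x.snd + bb n B x.fst x.fst) + x.snd + bb n B (-x.fst) x.fst = 0
      rw [bb_neg_left]; abel

lemma mul_def (x y : Hgp n B) :
    x * y = ⟨x.fst + y.fst, x.snd + y.snd + bb n B x.fst y.fst⟩ := rfl

lemma one_def : (1 : Hgp n B) = ⟨0, 0⟩ := rfl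

lemma inv_def (x : Hgp n B) : x⁻¹ = ⟨-x.fst, -x.snd + bb n B x.fst x.fst⟩ := rfl

lemma commutator_eq (x y : Hgp n B) :
    ⁅x, y⁆ = ⟨0, bb n B x.fst y.fst - bb n B y.fst x.fst⟩ := by
  have h : x * y = (⟨0, bb n B x.fst y.fst - bb n B y.fst x.fst⟩ : Hgp n B) * (y * x) := by
    refine ext' n B ?_ ?_
    · show x.fst + y.fst = 0 + (y.fst + x.fst); module
    · show x.snd + y.snd + bb n B x.fst y.fst
        = (bb n B x.fst y.fst - bb n B y.fst x.fst) + (y.snd + x.snd + bb n B y.fst x.fst)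
          + bb n B 0 (y.fst + x.fst)
      rw [bb_zero_left]; abel
  have : ⁅x, y⁆ = (x * y) * (y * x)⁻¹ := by group
  rw [this, h, mul_inv_cancel_right]

lemma central_of_fst_eq_zero (x : Hgp n B) (hx : x.fst = 0) (y : Hgp n B) :
    x * y = y * x := by
  refine ext' n B ?_ ?_
  · show x.fst + y.fst = y.fst + x.fst; module
  · show x.snd + y.snd + bb n B x.fst y.fst = y.snd + x.snd + bb n B y.fst x.fst
    rw [hx, bb_zero_left, bb_zero_right]; abel

/-- projection to the first component -/
noncomputable def proj : Hgp n B →* Multiplicative (Fin n → ℤ) where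
  toFun x := Multiplicative.ofAdd x.fst
  map_one' := rfl
  map_mul' x y := rfl

lemma fst_commutator (x y : Hgp n B) : (⁅x, y⁆).fst = 0 := by
  rw [commutator_eq]

lemma lcs_two_eq_bot : (⊤ : Subgroup (Hgp n B)).lowerCentralSeries 2 = ⊥ := by
  have h1 : (⊤ : Subgroup (Hgp n B)).lowerCentralSeries 1 ≤ (proj n B).ker := by
    rw [Subgroup.top_lowerCentralSeries_one, commutator, Subgroup.commutator_le]
    intro p _ q _
    rw [MonoidHom.mem_ker, map_commutatorElement]
    exact commutatorElement_eq_one_iff_mul_comm.2 (mul_comm _ _)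
  have h2 : (⊤ : Subgroup (Hgp n B)).lowerCentralSeries 2 = ⁅(⊤ : Subgroup (Hgp n B)).lowerCentralSeries 1, (⊤ : Subgroup (Hgp n B))⁆ :=
    rfl
  rw [eq_bot_iff, h2, Subgroup.commutator_le]
  intro p hp q _
  rw [Subgroup.mem_bot]
  refine commutatorElement_eq_one_iff_mul_comm.2 ?_
  refine central_of_fst_eq_zero n B p ?_ q
  have := h1 hp
  rw [MonoidHom.mem_ker] at this
  exact congrArg Multiplicative.toAdd this

end Hgp

end CFAux
namespace CFAux

variable (n : ℕ) (B : Finset (Finset (Fin n)))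

lemma dl_eq_zero {p : Fin n × Fin n} (h : p ∉ Spairs n B) : dl n B p = 0 := dif_neg h

lemma dl_eq_single {p : Fin n × Fin n} (h : p ∈ Spairs n B) :
    dl n B p = Pi.single (⟨p, h⟩ : ↥(Spairs n B)) 1 := dif_pos h

lemma sum_sum_ee_zero (s : Finset (Fin n)) :
    ∑ j ∈ s, ∑ l ∈ s.erase j, ee n B j l = 0 := by
  have h : ∀ j ∈ s, ∑ l ∈ s.erase j, ee n B j l = ∑ l ∈ s, ee n B j l := fun j _ =>
    Finset.sum_erase _ (ee_self n B j)
  rw [Finset.sum_congr rfl h]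
  have hX : (∑ j ∈ s, ∑ l ∈ s, ee n B j l) + (∑ j ∈ s, ∑ l ∈ s, ee n B j l) = 0 := by
    conv_lhs => lhs; rw [Finset.sum_comm]
    rw [← Finset.sum_add_distrib]
    refine Finset.sum_eq_zero fun a _ => ?_
    rw [← Finset.sum_add_distrib]
    refine Finset.sum_eq_zero fun b _ => ?_
    rw [ee_antisymm]
    exact neg_add_cancel _
  have h2 : (2:ℚ) • (∑ j ∈ s, ∑ l ∈ s, ee n B j l) = 0 := by
    rw [two_smul]; exact hX
  rcases smul_eq_zero.mp h2 with h|h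
  · norm_num at h
  · exact h

section WithPair

variable (hpair : ∀ i j : Fin n, i ≠ j → ∃! b, b ∈ B ∧ i ∈ b ∧ j ∈ b)
include hpair

lemma blk_spec {i j : Fin n} (hij : i ≠ j) :
    blk n B i j ∈ B ∧ i ∈ blk n B i j ∧ j ∈ blk n B i j := by
  rw [blk, dif_pos (hpair i j hij)]
  exact (hpair i j hij).choose_spec.1

lemma blk_eq {i j : Fin n} (hij : i ≠ j) {b : Finset (Fin n)}
    (hb : b ∈ B) (hi : i ∈ b) (hj : j ∈ b) : b = blk n B i j := by
  rw [blk, dif_pos (hpair i j hij)]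
  exact (hpair i j hij).choose_spec.2 b ⟨hb, hi, hj⟩

lemma cc_antisymm (i j : Fin n) : cc n B j i = - cc n B i j := by
  rcases eq_or_ne i j with rfl|hij
  · simp [cc]
  · have h1 := blk_spec n B hpair hij.symm
    have hb : blk n B j i = blk n B i j :=
      blk_eq n B hpair hij h1.1 h1.2.2 h1.2.1
    rw [cc, if_neg hij.symm, cc, if_neg hij, hb, Finset.erase_right_comm, ee_antisymm]
    abel

lemma ee_min {b : Finset (Fin n)} (hb : b ∈ B) {i j : Fin n} (hi : i ∈ b) (hj : j ∈ b)
    (hmin : ∀ w ∈ b, ¬ w < i) : ee n B i j = 0 := by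
  rcases eq_or_ne i j with rfl|hne
  · exact ee_self n B i
  rw [ee, dl_eq_zero, dl_eq_zero, sub_zero]
  · rw [mem_Spairs]
    rintro ⟨hlt, -⟩
    exact hmin j hj hlt
  · rw [mem_Spairs]
    rintro ⟨hlt, b', hb', hib', hjb', w, hwb', hwi⟩
    have : b' = b := by
      rw [blk_eq n B hpair hne hb hi hj, blk_eq n B hpair hne hb' hib' hjb']
    exact hmin w (this ▸ hwb') hwi

lemma cc_spair {i j : Fin n} (h : (i,j) ∈ Spairs n B) :
    cc n B i j = Pi.single (⟨(i,j), h⟩ : ↥(Spairs n B)) 1 := by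
  obtain ⟨hij, b, hb, hib, hjb, m, hmb, hmi⟩ := (mem_Spairs n B).1 h
  have hne : i ≠ j := ne_of_lt hij
  have hbe : b = blk n B i j := blk_eq n B hpair hne hb hib hjb
  have hA : ¬ (i ∈ blk n B i j ∧ ∀ w ∈ blk n B i j, ¬ w < i) := by
    rintro ⟨-, hmin⟩; exact hmin m (hbe ▸ hmb) hmi
  have hB : ¬ (j ∈ blk n B i j ∧ ∀ w ∈ blk n B i j, ¬ w < j) := by
    rintro ⟨-, hmin⟩; exact hmin m (hbe ▸ hmb) (hmi.trans hij)
  rw [cc, if_neg hne, if_neg hA, if_neg hB, ee, dl_eq_single n B h, dl_eq_zero, sub_zero,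
    add_zero, sub_zero]
  rw [mem_Spairs]
  rintro ⟨hlt, -⟩
  exact absurd hlt (asymm hij)

lemma sum_cc_erase {b : Finset (Fin n)} (hb : b ∈ B) (hbc : b.Nonempty) {k : Fin n}
    (hk : k ∈ b) : ∑ j ∈ b.erase k, cc n B k j = 0 := by
  obtain ⟨m, hm, hmin⟩ : ∃ m ∈ b, ∀ w ∈ b, ¬ w < m :=
    ⟨b.min' hbc, b.min'_mem hbc, fun w hw => not_lt.2 (b.min'_le w hw)⟩
  by_cases hkm : k = m
  · subst hkm
    have step : ∀ j ∈ b.erase k, cc n B k j = ∑ l ∈ (b.erase k).erase j, ee n B j l := by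
      intro j hj
      obtain ⟨hjk, hjb⟩ := Finset.mem_erase.1 hj
      have hne : k ≠ j := Ne.symm hjk
      have hbe : b = blk n B k j := blk_eq n B hpair hne hb hm hjb
      have hA : k ∈ blk n B k j ∧ ∀ w ∈ blk n B k j, ¬ w < k := by
        rw [← hbe]; exact ⟨hm, hmin⟩
      have hB : ¬ (j ∈ blk n B k j ∧ ∀ w ∈ blk n B k j, ¬ w < j) := by
        rw [← hbe]
        rintro ⟨-, hmin'⟩
        exact hmin' k hm (lt_of_le_of_ne (not_lt.1 (hmin j hjb)) hjk.symm)
      have he : ee n B k j = 0 := ee_min n B hpair hb hm hjb hmin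
      rw [cc, if_neg hne, if_pos hA, if_neg hB, ← hbe, he, zero_add, sub_zero]
    rw [Finset.sum_congr rfl step, sum_sum_ee_zero]
  · have hm' : m ∈ b.erase k := Finset.mem_erase.2 ⟨fun h => hkm h.symm, hm⟩
    have step : ∀ j ∈ b.erase k, cc n B k j
        = ee n B k j - (if j = m then ∑ l ∈ (b.erase k).erase m, ee n B k l else 0) := by
      intro j hj
      obtain ⟨hjk, hjb⟩ := Finset.mem_erase.1 hj
      have hne : k ≠ j := Ne.symm hjk
      have hbe : b = blk n B k j := blk_eq n B hpair hne hb hk hjb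
      have hA : ¬ (k ∈ blk n B k j ∧ ∀ w ∈ blk n B k j, ¬ w < k) := by
        rw [← hbe]
        rintro ⟨-, hmin'⟩
        exact hmin' m hm (lt_of_le_of_ne (not_lt.1 (hmin k hk)) (fun h => hkm h.symm))
      by_cases hjm : j = m
      · subst hjm
        have hB : j ∈ blk n B k j ∧ ∀ w ∈ blk n B k j, ¬ w < j := by
          rw [← hbe]; exact ⟨hjb, hmin⟩
        rw [cc, if_neg hne, if_neg hA, if_pos hB, ← hbe, if_pos rfl, add_zero]
      · have hB : ¬ (j ∈ blk n B k j ∧ ∀ w ∈ blk n B k j, ¬ w < j) := by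
          rw [← hbe]
          rintro ⟨-, hmin'⟩
          exact hmin' m hm (lt_of_le_of_ne (not_lt.1 (hmin j hjb)) (fun h => hjm h.symm))
        rw [cc, if_neg hne, if_neg hA, if_neg hB, if_neg hjm, add_zero]
    rw [Finset.sum_congr rfl step, Finset.sum_sub_distrib]
    have h1 : ∑ j ∈ b.erase k, (if j = m then ∑ l ∈ (b.erase k).erase m, ee n B k l else 0)
        = ∑ l ∈ (b.erase k).erase m, ee n B k l := by
      rw [Finset.sum_ite_eq' (b.erase k) m (fun _ => ∑ l ∈ (b.erase k).erase m, ee n B k l),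
        if_pos hm']
    have h2 : ∑ j ∈ b.erase k, ee n B k j
        = ee n B k m + ∑ j ∈ (b.erase k).erase m, ee n B k j :=
      (Finset.add_sum_erase _ _ hm').symm
    have h3 : ee n B k m = 0 := by
      rw [ee_antisymm, ee_min n B hpair hb hm hk hmin, neg_zero]
    rw [h1, h2, h3, zero_add, sub_self]

end WithPair

end CFAux

namespace CFAux

variable (n : ℕ) (B : Finset (Finset (Fin n)))

lemma lcs_succ' (G : Type*) [Group G] (k : ℕ) :
    (⊤ : Subgroup G).lowerCentralSeries (k+1) = ⁅(⊤ : Subgroup G).lowerCentralSeries k, ⊤⁆ := by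
  rw [Subgroup.lowerCentralSeries_succ]

lemma commutator_mem_lcs_one {G : Type*} [Group G] (u v : G) :
    ⁅u, v⁆ ∈ (⊤ : Subgroup G).lowerCentralSeries 1 := by
  rw [Subgroup.top_lowerCentralSeries_one, commutator]
  exact Subgroup.commutator_mem_commutator (Subgroup.mem_top u) (Subgroup.mem_top v)

noncomputable def gensH (i : Fin n) : Hgp n B := ⟨Pi.single i 1, 0⟩

lemma fst_prod_gensH (l : List (Fin n)) :
    ((l.map (gensH n B)).prod).fst = (l.map (fun i => Pi.single i (1:ℤ))).sum := by
  induction l with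
  | nil => rfl
  | cons a t ih =>
    rw [List.map_cons, List.prod_cons, List.map_cons, List.sum_cons, Hgp.mul_def]
    dsimp [gensH]
    rw [ih]

lemma sum_single_apply (l : List (Fin n)) (hl : l.Nodup) (j : Fin n) :
    (l.map (fun i => Pi.single i (1:ℤ))).sum j = if j ∈ l then 1 else 0 := by
  induction l with
  | nil => simp
  | cons a t ih =>
    obtain ⟨ha, ht⟩ := List.nodup_cons.1 hl
    rw [List.map_cons, List.sum_cons]
    by_cases hj : j = a
    · subst hj
      have : j ∉ t := ha
      simp [Pi.single_apply, ih ht, this]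
    · simp [Pi.single_apply, ih ht, hj, List.mem_cons]

lemma bb_single_single (i j : Fin n) :
    bb n B (Pi.single i 1) (Pi.single j 1) = cc n B i j := by
  rw [bb_single_left]
  rw [Finset.sum_eq_single j]
  · simp [Pi.single_apply]
  · intro k _ hk
    simp [Pi.single_apply, hk]
  · simp

section Model

variable (hpair : ∀ i j : Fin n, i ≠ j → ∃! b, b ∈ B ∧ i ∈ b ∧ j ∈ b)
include hpair

lemma relator_commutator_eq_one {b : Finset (Fin n)} (hb : b ∈ B) {x : Fin n}
    {xs : List (Fin n)} (hx : x ∈ b) (hnd : xs.Nodup) (hxs : xs.toFinset = b.erase x) :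
    ⁅gensH n B x, (xs.map (gensH n B)).prod⁆ = 1 := by
  rw [Hgp.commutator_eq, Hgp.one_def]
  refine Hgp.ext' n B rfl ?_
  show bb n B (gensH n B x).fst ((xs.map (gensH n B)).prod).fst
      - bb n B ((xs.map (gensH n B)).prod).fst (gensH n B x).fst = 0
  rw [fst_prod_gensH]
  have hgx : (gensH n B x).fst = Pi.single x 1 := rfl
  rw [hgx]
  set a := (xs.map (fun i => Pi.single i (1:ℤ))).sum with ha
  rw [bb_single_left, bb_single_right, ← Finset.sum_sub_distrib]
  have hzero : ∑ j, a j • cc n B x j = 0 := by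
    have step : ∀ j : Fin n, a j • cc n B x j = if j ∈ xs.toFinset then cc n B x j else 0 := by
      intro j
      rw [ha, sum_single_apply n xs hnd j]
      by_cases hj : j ∈ xs
      · rw [if_pos hj, if_pos (List.mem_toFinset.2 hj), one_smul]
      · rw [if_neg hj, if_neg (fun hc => hj (List.mem_toFinset.1 hc)), zero_smul]
    rw [Finset.sum_congr rfl (fun j _ => step j), Finset.sum_ite_mem, Finset.univ_inter, hxs]
    exact sum_cc_erase n B hpair hb ⟨x, hx⟩ hx
  calc ∑ j, (a j • cc n B x j - a j • cc n B j x)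
      = ∑ j, a j • (cc n B x j - cc n B j x) := by
        refine Finset.sum_congr rfl fun j _ => ?_; rw [smul_sub]
    _ = ∑ j, a j • ((2:ℚ) • cc n B x j) := by
        refine Finset.sum_congr rfl fun j _ => ?_
        rw [cc_antisymm n B hpair x j, sub_neg_eq_add, two_smul]
    _ = (2:ℚ) • ∑ j, a j • cc n B x j := by
        rw [Finset.smul_sum]
        exact Finset.sum_congr rfl fun j _ => (smul_comm _ _ _).symm
    _ = 0 := by rw [hzero, smul_zero]

omit hpair in
lemma rot_facts {b : Finset (Fin n)} {i : ℕ} {x : Fin n} {xs : List (Fin n)}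
    (h : (b.sort (· ≤ ·)).reverse.rotate i = x :: xs) :
    x ∈ b ∧ xs.Nodup ∧ xs.toFinset = b.erase x := by
  have hperm : (x :: xs).Perm (b.sort (· ≤ ·)) := by
    rw [← h]; exact (List.rotate_perm _ i).trans (List.reverse_perm _)
  have hnd : (x :: xs).Nodup := hperm.symm.nodup (Finset.sort_nodup b (· ≤ ·))
  have htf : (x :: xs).toFinset = b := by
    ext a
    rw [List.mem_toFinset, hperm.mem_iff, Finset.mem_sort]
  obtain ⟨hxnm, hxsnd⟩ := List.nodup_cons.1 hnd
  have hxb : x ∈ b := by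
    rw [← htf]; simp
  refine ⟨hxb, hxsnd, ?_⟩
  rw [← htf, List.toFinset_cons, Finset.erase_insert]
  rw [List.mem_toFinset]
  exact hxnm

lemma lift_relators : ∀ r ∈ cfRelators B, FreeGroup.lift (gensH n B) r = 1 := by
  rintro r ⟨b, hb, i, hi, x, xs, hrot, rfl⟩
  obtain ⟨hx, hnd, hxs⟩ := rot_facts n hrot
  rw [map_commutatorElement, FreeGroup.lift_apply_of, map_list_prod, List.map_map]
  have hcomp : (FreeGroup.lift (gensH n B)) ∘ FreeGroup.of = gensH n B :=
    funext fun i => FreeGroup.lift_apply_of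
  rw [hcomp]
  exact relator_commutator_eq_one n B hpair hb hx hnd hxs

noncomputable def phiH : PresentedGroup (cfRelators B) →* Hgp n B :=
  PresentedGroup.toGroup (lift_relators n B hpair)

lemma phiH_of (i : Fin n) : phiH n B hpair (PresentedGroup.of i) = gensH n B i :=
  PresentedGroup.toGroup.of _

end Model

end CFAux

namespace CFAux

variable (n : ℕ) (B : Finset (Finset (Fin n)))

/-- the abelianized second lcs quotient, additively -/
abbrev Mt := Additive (Abelianization (lcsQuot (PresentedGroup (cfRelators B)) 2))

noncomputable def gg (i : Fin n) : PresentedGroup (cfRelators B) := PresentedGroup.of i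

noncomputable def clm (w : PresentedGroup (cfRelators B))
    (hw : w ∈ (⊤ : Subgroup (PresentedGroup (cfRelators B))).lowerCentralSeries 1) : Mt n B :=
  Additive.ofMul (Abelianization.of
    ((QuotientGroup.mk ⟨w, hw⟩ : lcsQuot (PresentedGroup (cfRelators B)) 2)))

lemma clm_congr {w w' : PresentedGroup (cfRelators B)} (e : w = w')
    (h : w ∈ (⊤ : Subgroup (PresentedGroup (cfRelators B))).lowerCentralSeries 1)
    (h' : w' ∈ (⊤ : Subgroup (PresentedGroup (cfRelators B))).lowerCentralSeries 1) :
    clm n B w h = clm n B w' h' := by subst e; rfl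

lemma clm_mul (w w' : PresentedGroup (cfRelators B))
    (h : w ∈ (⊤ : Subgroup (PresentedGroup (cfRelators B))).lowerCentralSeries 1)
    (h' : w' ∈ (⊤ : Subgroup (PresentedGroup (cfRelators B))).lowerCentralSeries 1)
    (h'' : w * w' ∈ (⊤ : Subgroup (PresentedGroup (cfRelators B))).lowerCentralSeries 1) :
    clm n B (w * w') h'' = clm n B w h + clm n B w' h' := by
  unfold clm
  have : (⟨w * w', h''⟩ : (⊤ : Subgroup (PresentedGroup (cfRelators B))).lowerCentralSeries 1)
      = ⟨w, h⟩ * ⟨w', h'⟩ := rfl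
  rw [this, QuotientGroup.mk_mul]
  exact congrArg Additive.ofMul (map_mul Abelianization.of _ _)

lemma clm_one (h : (1 : PresentedGroup (cfRelators B)) ∈
    (⊤ : Subgroup (PresentedGroup (cfRelators B))).lowerCentralSeries 1) : clm n B 1 h = 0 := by
  unfold clm
  have : (⟨(1 : PresentedGroup (cfRelators B)), h⟩ :
      (⊤ : Subgroup (PresentedGroup (cfRelators B))).lowerCentralSeries 1) = 1 := rfl
  rw [this, QuotientGroup.mk_one]
  exact congrArg Additive.ofMul (map_one Abelianization.of)

lemma clm_inv (w : PresentedGroup (cfRelators B))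
    (h : w ∈ (⊤ : Subgroup (PresentedGroup (cfRelators B))).lowerCentralSeries 1)
    (h' : w⁻¹ ∈ (⊤ : Subgroup (PresentedGroup (cfRelators B))).lowerCentralSeries 1) :
    clm n B w⁻¹ h' = - clm n B w h := by
  have hm : w⁻¹ * w ∈ (⊤ : Subgroup (PresentedGroup (cfRelators B))).lowerCentralSeries 1 := mul_mem h' h
  have h0 := clm_mul n B w⁻¹ w h' h hm
  have h1 : clm n B (w⁻¹ * w) hm = 0 := by
    rw [clm_congr n B (inv_mul_cancel w) hm (Subgroup.one_mem _), clm_one]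
  rw [h1] at h0
  exact eq_neg_of_add_eq_zero_left h0.symm

end CFAux

namespace CFAux

variable (n : ℕ) (B : Finset (Finset (Fin n)))

lemma clm_lcs2 (w : PresentedGroup (cfRelators B))
    (h : w ∈ (⊤ : Subgroup (PresentedGroup (cfRelators B))).lowerCentralSeries 1)
    (h2 : w ∈ (⊤ : Subgroup (PresentedGroup (cfRelators B))).lowerCentralSeries 2) :
    clm n B w h = 0 := by
  unfold clm
  have : (QuotientGroup.mk ⟨w, h⟩ : lcsQuot (PresentedGroup (cfRelators B)) 2) = 1 := by
    rw [QuotientGroup.eq_one_iff]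
    exact Subgroup.mem_subgroupOf.2 h2
  rw [this]
  exact congrArg Additive.ofMul (map_one Abelianization.of)

lemma clm_conj (g w : PresentedGroup (cfRelators B))
    (hw : w ∈ (⊤ : Subgroup (PresentedGroup (cfRelators B))).lowerCentralSeries 1)
    (h' : g * w * g⁻¹ ∈ (⊤ : Subgroup (PresentedGroup (cfRelators B))).lowerCentralSeries 1) :
    clm n B (g * w * g⁻¹) h' = clm n B w hw := by
  have hc2 : ⁅g, w⁆ ∈ (⊤ : Subgroup (PresentedGroup (cfRelators B))).lowerCentralSeries 2 := by
    have hc : ⁅g, w⁆ ∈ ⁅(⊤ : Subgroup (PresentedGroup (cfRelators B))),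
        (⊤ : Subgroup (PresentedGroup (cfRelators B))).lowerCentralSeries 1⁆ :=
      Subgroup.commutator_mem_commutator (Subgroup.mem_top g) hw
    rw [Subgroup.commutator_comm, ← lcs_succ'] at hc
    exact hc
  have hc1 : ⁅g, w⁆ ∈ (⊤ : Subgroup (PresentedGroup (cfRelators B))).lowerCentralSeries 1 :=
    commutator_mem_lcs_one g w
  have he : g * w * g⁻¹ = ⁅g, w⁆ * w := by group
  rw [clm_congr n B he h' (mul_mem hc1 hw), clm_mul n B _ _ hc1 hw, clm_lcs2 n B _ hc1 hc2,
    zero_add]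

lemma clm_commutator_prod (u : PresentedGroup (cfRelators B))
    (l : List (PresentedGroup (cfRelators B))) :
    clm n B ⁅u, l.prod⁆ (commutator_mem_lcs_one _ _)
      = (l.map (fun v => clm n B ⁅u, v⁆ (commutator_mem_lcs_one _ _))).sum := by
  induction l with
  | nil =>
    rw [List.map_nil, List.sum_nil, List.prod_nil]
    rw [clm_congr n B (commutatorElement_one_right u) _ (Subgroup.one_mem _), clm_one]
  | cons v t ih =>
    rw [List.map_cons, List.sum_cons, List.prod_cons]
    have hid : ⁅u, v * t.prod⁆ = ⁅u, v⁆ * (v * ⁅u, t.prod⁆ * v⁻¹) := by group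
    have h1 : ⁅u, v⁆ ∈ (⊤ : Subgroup (PresentedGroup (cfRelators B))).lowerCentralSeries 1 :=
      commutator_mem_lcs_one _ _
    have h2 : v * ⁅u, t.prod⁆ * v⁻¹ ∈ (⊤ : Subgroup (PresentedGroup (cfRelators B))).lowerCentralSeries 1 := by
      have hn : ((⊤ : Subgroup (PresentedGroup (cfRelators B))).lowerCentralSeries 1).Normal :=
        Subgroup.lowerCentralSeries_normal ⊤ 1
      exact hn.conj_mem _ (commutator_mem_lcs_one _ _) v
    rw [clm_congr n B hid _ (mul_mem h1 h2), clm_mul n B _ _ h1 h2,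
      clm_conj n B v ⁅u, t.prod⁆ (commutator_mem_lcs_one _ _) h2, ih]

noncomputable def aM (i j : Fin n) : Mt n B :=
  clm n B ⁅gg n B i, gg n B j⁆ (commutator_mem_lcs_one _ _)

lemma aM_self (i : Fin n) : aM n B i i = 0 := by
  unfold aM
  have h : ⁅gg n B i, gg n B i⁆ = 1 := by group
  rw [clm_congr n B h _ (Subgroup.one_mem _), clm_one]

lemma aM_swap (i j : Fin n) : aM n B j i = - aM n B i j := by
  unfold aM
  rw [clm_congr n B (commutatorElement_inv (gg n B i) (gg n B j)).symm _
      (((⊤ : Subgroup (PresentedGroup (cfRelators B))).lowerCentralSeries 1).inv_mem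
        (commutator_mem_lcs_one _ _)), clm_inv]

lemma sum_aM_erase {b : Finset (Fin n)} (hb : b ∈ B) {x : Fin n} (hx : x ∈ b) :
    ∑ j ∈ b.erase x, aM n B x j = 0 := by
  classical
  -- build the rotation presenting x first
  set L := (b.sort (· ≤ ·)).reverse with hL
  have hxL : x ∈ L := by
    rw [hL, List.mem_reverse, Finset.mem_sort]; exact hx
  set idx := L.idxOf x with hidx
  have hlt : idx < L.length := List.idxOf_lt_length_iff.2 hxL
  have hlen : L.length = b.card := by
    rw [hL, List.length_reverse, Finset.length_sort]
  set xs := L.drop (idx + 1) ++ L.take idx with hxs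
  have hrot : L.rotate idx = x :: xs := by
    rw [List.rotate_eq_drop_append_take (le_of_lt hlt), List.drop_eq_getElem_cons hlt,
      List.getElem_idxOf hlt, hxs]
    rfl
  have hrel : ⁅FreeGroup.of x, (xs.map FreeGroup.of).prod⁆ ∈ cfRelators B :=
    ⟨b, hb, idx, hlen ▸ hlt, x, xs, hrot, rfl⟩
  obtain ⟨hxb, hnd, htf⟩ := rot_facts n hrot
  have h1 : (PresentedGroup.mk (cfRelators B)) ⁅FreeGroup.of x, (xs.map FreeGroup.of).prod⁆ = 1 :=
    (QuotientGroup.eq_one_iff _).2 (Subgroup.subset_normalClosure hrel)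
  have h2 : ⁅gg n B x, (xs.map (gg n B)).prod⁆ = 1 := by
    rw [map_commutatorElement, map_list_prod, List.map_map] at h1
    exact h1
  have h3 : clm n B ⁅gg n B x, (xs.map (gg n B)).prod⁆ (commutator_mem_lcs_one _ _)
      = (xs.map (fun j => aM n B x j)).sum := by
    rw [clm_commutator_prod n B, List.map_map]
    rfl
  have h5 : clm n B ⁅gg n B x, (xs.map (gg n B)).prod⁆ (commutator_mem_lcs_one _ _) = 0 := by
    rw [clm_congr n B h2 _ (Subgroup.one_mem _), clm_one]
  have h4 : (xs.map (fun j => aM n B x j)).sum = ∑ j ∈ xs.toFinset, aM n B x j :=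
    (List.sum_toFinset _ hnd).symm
  rw [← htf, ← h4, ← h3, h5]

end CFAux

namespace CFAux

variable (n : ℕ) (B : Finset (Finset (Fin n)))

/-- the subgroup generated by commutators of generators together with γ₃ -/
noncomputable def KK : Subgroup (PresentedGroup (cfRelators B)) :=
  Subgroup.closure ({w | ∃ i j, w = ⁅gg n B i, gg n B j⁆} ∪
    ((⊤ : Subgroup (PresentedGroup (cfRelators B))).lowerCentralSeries 2 : Set (PresentedGroup (cfRelators B))))

lemma KK_le_lcs_one : KK n B ≤ (⊤ : Subgroup (PresentedGroup (cfRelators B))).lowerCentralSeries 1 := by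
  refine (Subgroup.closure_le _).2 ?_
  rintro w (⟨i, j, rfl⟩ | hw2)
  · exact commutator_mem_lcs_one _ _
  · exact Subgroup.lowerCentralSeries_antitone ⊤ (by norm_num) hw2

lemma conj_mem_KK (g w : PresentedGroup (cfRelators B)) (hw : w ∈ KK n B) :
    g * w * g⁻¹ ∈ KK n B := by
  have hw1 : w ∈ (⊤ : Subgroup (PresentedGroup (cfRelators B))).lowerCentralSeries 1 := KK_le_lcs_one n B hw
  have hc2 : ⁅g, w⁆ ∈ (⊤ : Subgroup (PresentedGroup (cfRelators B))).lowerCentralSeries 2 := by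
    have hc : ⁅g, w⁆ ∈ ⁅(⊤ : Subgroup (PresentedGroup (cfRelators B))),
        (⊤ : Subgroup (PresentedGroup (cfRelators B))).lowerCentralSeries 1⁆ :=
      Subgroup.commutator_mem_commutator (Subgroup.mem_top g) hw1
    rw [Subgroup.commutator_comm, ← lcs_succ'] at hc
    exact hc
  have he : g * w * g⁻¹ = ⁅g, w⁆ * w := by group
  rw [he]
  exact mul_mem (Subgroup.subset_closure (Or.inr hc2)) hw

lemma mem_closure_range_gg (y : PresentedGroup (cfRelators B)) :
    y ∈ Subgroup.closure (Set.range (gg n B)) := by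
  have : Set.range (gg n B)
      = Set.range (PresentedGroup.of (rels := cfRelators B)) := rfl
  rw [this, PresentedGroup.closure_range_of]
  exact Subgroup.mem_top y

lemma commutator_mem_KK (x y : PresentedGroup (cfRelators B)) : ⁅x, y⁆ ∈ KK n B := by
  have hinner : ∀ (i : Fin n) (y : PresentedGroup (cfRelators B)), ⁅gg n B i, y⁆ ∈ KK n B := by
    intro i y
    refine Subgroup.closure_induction (p := fun z _ => ⁅gg n B i, z⁆ ∈ KK n B)
      ?_ ?_ ?_ ?_ (mem_closure_range_gg n B y)
    · rintro z ⟨j, rfl⟩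
      exact Subgroup.subset_closure (Or.inl ⟨i, j, rfl⟩)
    · show ⁅gg n B i, (1 : PresentedGroup (cfRelators B))⁆ ∈ KK n B
      have h1 : ⁅gg n B i, (1 : PresentedGroup (cfRelators B))⁆ = 1 := by group
      rw [h1]; exact (KK n B).one_mem
    · intro a b _ _ ha hb
      show ⁅gg n B i, a * b⁆ ∈ KK n B
      have hid : ⁅gg n B i, a * b⁆ = ⁅gg n B i, a⁆ * (a * ⁅gg n B i, b⁆ * a⁻¹) := by group
      rw [hid]
      exact mul_mem ha (conj_mem_KK n B a _ hb)
    · intro a _ ha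
      show ⁅gg n B i, a⁻¹⁆ ∈ KK n B
      have hid : ⁅gg n B i, a⁻¹⁆ = a⁻¹ * ⁅gg n B i, a⁆⁻¹ * (a⁻¹)⁻¹ := by group
      rw [hid]
      exact conj_mem_KK n B a⁻¹ _ ((KK n B).inv_mem ha)
  have houter : ∀ z : PresentedGroup (cfRelators B),
      z ∈ Subgroup.closure (Set.range (gg n B)) →
      ∀ y : PresentedGroup (cfRelators B), ⁅z, y⁆ ∈ KK n B := by
    intro z hz
    refine Subgroup.closure_induction
      (p := fun z _ => ∀ y : PresentedGroup (cfRelators B), ⁅z, y⁆ ∈ KK n B)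
      ?_ ?_ ?_ ?_ hz
    · rintro z ⟨i, rfl⟩ y
      exact hinner i y
    · intro y
      have h1 : ⁅(1 : PresentedGroup (cfRelators B)), y⁆ = 1 := by group
      rw [h1]; exact (KK n B).one_mem
    · intro a b _ _ ha hb y
      have hid : ⁅a * b, y⁆ = (a * ⁅b, y⁆ * a⁻¹) * ⁅a, y⁆ := by group
      rw [hid]
      exact mul_mem (conj_mem_KK n B a _ (hb y)) (ha y)
    · intro a _ ha y
      have hid : ⁅a⁻¹, y⁆ = a⁻¹ * ⁅a, y⁆⁻¹ * (a⁻¹)⁻¹ := by group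
      rw [hid]
      exact conj_mem_KK n B a⁻¹ _ ((KK n B).inv_mem (ha y))
  exact houter x (mem_closure_range_gg n B x) y

lemma lcs_one_le_KK :
    (⊤ : Subgroup (PresentedGroup (cfRelators B))).lowerCentralSeries 1 ≤ KK n B := by
  rw [Subgroup.top_lowerCentralSeries_one, commutator, Subgroup.commutator_le]
  intro g1 _ g2 _
  exact commutator_mem_KK n B g1 g2

end CFAux

namespace CFAux

variable (n : ℕ) (B : Finset (Finset (Fin n)))

noncomputable def tauSet : Set (ℚ ⊗[ℤ] Mt n B) :=
  {z | ∃ p ∈ Spairs n B, z = (1:ℚ) ⊗ₜ[ℤ] aM n B p.1 p.2}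

section SpanSec

variable (hpair : ∀ i j : Fin n, i ≠ j → ∃! b, b ∈ B ∧ i ∈ b ∧ j ∈ b)
include hpair

lemma tau_mem_span_of_lt {i j : Fin n} (hlt : i < j) :
    (1:ℚ) ⊗ₜ[ℤ] aM n B i j ∈ Submodule.span ℚ (tauSet n B) := by
  by_cases hS : (i, j) ∈ Spairs n B
  · exact Submodule.subset_span ⟨(i, j), hS, rfl⟩
  · have hne : i ≠ j := ne_of_lt hlt
    obtain ⟨hbB, hib, hjb⟩ := blk_spec n B hpair hne
    set b := blk n B i j with hbdef
    have hmin : ∀ w ∈ b, ¬ w < i := by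
      intro w hw hwi
      exact hS ((mem_Spairs n B).2 ⟨hlt, b, hbB, hib, hjb, w, hw, hwi⟩)
    have hrel := sum_aM_erase n B hbB hjb
    have hi' : i ∈ b.erase j := Finset.mem_erase.2 ⟨hne, hib⟩
    have hsum : aM n B j i + ∑ l ∈ (b.erase j).erase i, aM n B j l = 0 :=
      (Finset.add_sum_erase _ _ hi').trans hrel
    have h1 : aM n B j i = - ∑ l ∈ (b.erase j).erase i, aM n B j l :=
      eq_neg_of_add_eq_zero_left hsum
    have hij_eq : aM n B i j = ∑ l ∈ (b.erase j).erase i, aM n B j l := by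
      rw [aM_swap n B i j] at h1
      exact neg_injective h1
    rw [hij_eq, TensorProduct.tmul_sum]
    refine Submodule.sum_mem _ fun l hl => ?_
    obtain ⟨hli, hljb⟩ := Finset.mem_erase.1 hl
    obtain ⟨hlj, hlb⟩ := Finset.mem_erase.1 hljb
    have hil : i < l := lt_of_le_of_ne (not_lt.1 (hmin l hlb)) (Ne.symm hli)
    rcases lt_trichotomy j l with h | h | h
    · have hS' : (j, l) ∈ Spairs n B :=
        (mem_Spairs n B).2 ⟨h, b, hbB, hjb, hlb, i, hib, hlt⟩
      exact Submodule.subset_span ⟨(j, l), hS', rfl⟩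
    · exact absurd h (fun hh => hlj hh.symm)
    · have hS' : (l, j) ∈ Spairs n B :=
        (mem_Spairs n B).2 ⟨h, b, hbB, hlb, hjb, i, hib, hil⟩
      rw [aM_swap n B l j, TensorProduct.tmul_neg]
      exact Submodule.neg_mem _ (Submodule.subset_span ⟨(l, j), hS', rfl⟩)

lemma tau_mem_span (i j : Fin n) :
    (1:ℚ) ⊗ₜ[ℤ] aM n B i j ∈ Submodule.span ℚ (tauSet n B) := by
  rcases lt_trichotomy i j with h | h | h
  · exact tau_mem_span_of_lt n B hpair h
  · subst h
    rw [aM_self, TensorProduct.tmul_zero]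
    exact Submodule.zero_mem _
  · rw [aM_swap n B j i, TensorProduct.tmul_neg]
    exact Submodule.neg_mem _ (tau_mem_span_of_lt n B hpair h)

lemma span_tauSet_eq_top : Submodule.span ℚ (tauSet n B) = ⊤ := by
  rw [eq_top_iff]
  intro z _
  have hy : ∀ (w : PresentedGroup (cfRelators B))
      (hw : w ∈ (⊤ : Subgroup (PresentedGroup (cfRelators B))).lowerCentralSeries 1),
      (1:ℚ) ⊗ₜ[ℤ] clm n B w hw ∈ Submodule.span ℚ (tauSet n B) := by
    intro w hw
    have hwK := lcs_one_le_KK n B hw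
    unfold KK at hwK
    refine Subgroup.closure_induction
      (p := fun w _ => ∀ hw : w ∈ (⊤ : Subgroup (PresentedGroup (cfRelators B))).lowerCentralSeries 1,
        (1:ℚ) ⊗ₜ[ℤ] clm n B w hw ∈ Submodule.span ℚ (tauSet n B))
      ?_ ?_ ?_ ?_ hwK hw
    · rintro g (⟨i, j, rfl⟩ | hg2) hw'
      · have : clm n B ⁅gg n B i, gg n B j⁆ hw' = aM n B i j :=
          clm_congr n B rfl _ _
        rw [this]
        exact tau_mem_span n B hpair i j
      · rw [clm_lcs2 n B _ hw' hg2, TensorProduct.tmul_zero]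
        exact Submodule.zero_mem _
    · intro hw'
      rw [clm_one, TensorProduct.tmul_zero]
      exact Submodule.zero_mem _
    · intro a b hxa hxb ha hb hw'
      have ha1 : a ∈ (⊤ : Subgroup (PresentedGroup (cfRelators B))).lowerCentralSeries 1 :=
        KK_le_lcs_one n B hxa
      have hb1 : b ∈ (⊤ : Subgroup (PresentedGroup (cfRelators B))).lowerCentralSeries 1 :=
        KK_le_lcs_one n B hxb
      rw [clm_mul n B a b ha1 hb1 hw', TensorProduct.tmul_add]
      exact Submodule.add_mem _ (ha ha1) (hb hb1)
    · intro a hxa ha hw'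
      have ha1 : a ∈ (⊤ : Subgroup (PresentedGroup (cfRelators B))).lowerCentralSeries 1 :=
        KK_le_lcs_one n B hxa
      rw [clm_inv n B a ha1 hw', TensorProduct.tmul_neg]
      exact Submodule.neg_mem _ (ha ha1)
  have hall : ∀ m : Mt n B, (1:ℚ) ⊗ₜ[ℤ] m ∈ Submodule.span ℚ (tauSet n B) := by
    have hq : ∀ q : Abelianization (lcsQuot (PresentedGroup (cfRelators B)) 2),
        (1:ℚ) ⊗ₜ[ℤ] (Additive.ofMul q) ∈ Submodule.span ℚ (tauSet n B) := by
      intro q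
      refine QuotientGroup.induction_on q fun q' => ?_
      refine QuotientGroup.induction_on q' fun y => ?_
      exact hy y.1 y.2
    exact fun m => hq m.toMul
  refine TensorProduct.induction_on z (Submodule.zero_mem _) (fun q m => ?_)
    (fun u v hu hv => Submodule.add_mem _ hu hv)
  have : q ⊗ₜ[ℤ] m = q • ((1:ℚ) ⊗ₜ[ℤ] m) := by
    rw [TensorProduct.smul_tmul', smul_eq_mul, mul_one]
  rw [this]
  exact Submodule.smul_mem _ q (hall m)

end SpanSec

end CFAux

namespace CFAux

variable (n : ℕ) (B : Finset (Finset (Fin n)))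

lemma Hgp.lcs_one_le_ker :
    (⊤ : Subgroup (Hgp n B)).lowerCentralSeries 1 ≤ (Hgp.proj n B).ker := by
  rw [Subgroup.top_lowerCentralSeries_one, commutator, Subgroup.commutator_le]
  intro p _ q _
  rw [MonoidHom.mem_ker, map_commutatorElement]
  exact commutatorElement_eq_one_iff_mul_comm.2 (mul_comm _ _)

section MuSec

variable (hpair : ∀ i j : Fin n, i ≠ j → ∃! b, b ∈ B ∧ i ∈ b ∧ j ∈ b)

lemma phiH_fst_zero {w : PresentedGroup (cfRelators B)}
    (hw : w ∈ (⊤ : Subgroup (PresentedGroup (cfRelators B))).lowerCentralSeries 1) :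
    (phiH n B hpair w).fst = 0 := by
  have h1 : phiH n B hpair w ∈ (⊤ : Subgroup (Hgp n B)).lowerCentralSeries 1 :=
    Subgroup.lowerCentralSeries.map (phiH n B hpair) 1 (Subgroup.mem_map_of_mem _ hw)
  have h2 := Hgp.lcs_one_le_ker n B h1
  rw [MonoidHom.mem_ker] at h2
  exact congrArg Multiplicative.toAdd h2

lemma phiH_lcs2 {w : PresentedGroup (cfRelators B)}
    (hw : w ∈ (⊤ : Subgroup (PresentedGroup (cfRelators B))).lowerCentralSeries 2) :
    phiH n B hpair w = 1 := by
  have h1 : phiH n B hpair w ∈ (⊤ : Subgroup (Hgp n B)).lowerCentralSeries 2 :=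
    Subgroup.lowerCentralSeries.map (phiH n B hpair) 2 (Subgroup.mem_map_of_mem _ hw)
  rw [Hgp.lcs_two_eq_bot, Subgroup.mem_bot] at h1
  exact h1

noncomputable def rrr :
    ↥((⊤ : Subgroup (PresentedGroup (cfRelators B))).lowerCentralSeries 1) →* Multiplicative (Dsp n B) where
  toFun x := Multiplicative.ofAdd ((phiH n B hpair x.1).snd)
  map_one' := by
    show Multiplicative.ofAdd ((phiH n B hpair
      ((1 : ↥((⊤ : Subgroup (PresentedGroup (cfRelators B))).lowerCentralSeries 1)) :
        PresentedGroup (cfRelators B))).snd) = 1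
    have h : phiH n B hpair ((1 : ↥((⊤ : Subgroup (PresentedGroup (cfRelators B))).lowerCentralSeries 1)) :
        PresentedGroup (cfRelators B)) = 1 := by
      rw [OneMemClass.coe_one, map_one]
    rw [h]
    rfl
  map_mul' x y := by
    have hx : (phiH n B hpair x.1).fst = 0 := phiH_fst_zero n B hpair x.2
    show Multiplicative.ofAdd ((phiH n B hpair (x.1 * y.1)).snd) = _
    rw [map_mul, Hgp.mul_def]
    dsimp only
    rw [hx, bb_zero_left, add_zero]
    rfl

noncomputable def psiQ : lcsQuot (PresentedGroup (cfRelators B)) 2 →* Multiplicative (Dsp n B) :=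
  QuotientGroup.lift _ (rrr n B hpair) (by
    intro x hx
    have hx2 : x.1 ∈ (⊤ : Subgroup (PresentedGroup (cfRelators B))).lowerCentralSeries 2 :=
      Subgroup.mem_subgroupOf.1 hx
    show Multiplicative.ofAdd ((phiH n B hpair x.1).snd) = 1
    rw [phiH_lcs2 n B hpair hx2]
    rfl)

noncomputable def abH :
    Abelianization (lcsQuot (PresentedGroup (cfRelators B)) 2) →* Multiplicative (Dsp n B) :=
  Abelianization.lift (psiQ n B hpair)

noncomputable def muAdd : Mt n B →+ Dsp n B where
  toFun m := Multiplicative.toAdd (abH n B hpair m.toMul)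
  map_zero' := by
    show Multiplicative.toAdd (abH n B hpair (Additive.toMul 0)) = 0
    rw [toMul_zero, map_one]
    rfl
  map_add' x y := by
    show Multiplicative.toAdd (abH n B hpair (Additive.toMul (x + y))) = _
    rw [toMul_add, map_mul]
    rfl

noncomputable def mu : (ℚ ⊗[ℤ] Mt n B) →ₗ[ℚ] Dsp n B :=
  LinearMap.liftBaseChange ℚ (muAdd n B hpair).toIntLinearMap

lemma muAdd_clm (w : PresentedGroup (cfRelators B))
    (hw : w ∈ (⊤ : Subgroup (PresentedGroup (cfRelators B))).lowerCentralSeries 1) :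
    muAdd n B hpair (clm n B w hw) = (phiH n B hpair w).snd := by
  rfl

lemma mu_tau (i j : Fin n) :
    mu n B hpair ((1:ℚ) ⊗ₜ[ℤ] aM n B i j) = cc n B i j - cc n B j i := by
  unfold mu
  rw [LinearMap.liftBaseChange_tmul, one_smul]
  show muAdd n B hpair (aM n B i j) = _
  unfold aM
  rw [muAdd_clm n B hpair, map_commutatorElement]
  have h0 : ∀ k, phiH n B hpair (gg n B k) = gensH n B k := fun k => phiH_of n B hpair k
  rw [h0, h0, Hgp.commutator_eq]
  show bb n B (gensH n B i).fst (gensH n B j).fst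
      - bb n B (gensH n B j).fst (gensH n B i).fst = _
  have h1 : (gensH n B i).fst = Pi.single i 1 := rfl
  have h2 : (gensH n B j).fst = Pi.single j 1 := rfl
  rw [h1, h2, bb_single_single, bb_single_single]

end MuSec

end CFAux

namespace CFAux

variable (n : ℕ) (B : Finset (Finset (Fin n)))

noncomputable def theta : (↥(Spairs n B) → ℚ) →ₗ[ℚ] (ℚ ⊗[ℤ] Mt n B) :=
  ∑ s : ↥(Spairs n B), (LinearMap.proj s).smulRight ((1:ℚ) ⊗ₜ[ℤ] aM n B s.1.1 s.1.2)

lemma theta_single (s : ↥(Spairs n B)) :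
    theta n B (Pi.single s 1) = (1:ℚ) ⊗ₜ[ℤ] aM n B s.1.1 s.1.2 := by
  unfold theta
  rw [LinearMap.sum_apply]
  rw [Finset.sum_eq_single s]
  · rw [LinearMap.smulRight_apply, LinearMap.proj_apply, Pi.single_eq_same, one_smul]
  · intro t _ hts
    rw [LinearMap.smulRight_apply, LinearMap.proj_apply, Pi.single_eq_of_ne hts, zero_smul]
  · intro hs
    exact absurd (Finset.mem_univ s) hs

section RankSec

variable (hpair : ∀ i j : Fin n, i ≠ j → ∃! b, b ∈ B ∧ i ∈ b ∧ j ∈ b)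
include hpair

lemma theta_range_top : LinearMap.range (theta n B) = ⊤ := by
  rw [← top_le_iff, ← span_tauSet_eq_top n B hpair]
  refine Submodule.span_le.2 ?_
  rintro z ⟨p, hp, rfl⟩
  exact ⟨Pi.single ⟨p, hp⟩ 1, theta_single n B ⟨p, hp⟩⟩

lemma mu_tau_spair {p : Fin n × Fin n} (hp : p ∈ Spairs n B) :
    mu n B hpair ((1:ℚ) ⊗ₜ[ℤ] aM n B p.1 p.2)
      = (2:ℚ) • (Pi.single (⟨p, hp⟩ : ↥(Spairs n B)) (1:ℚ) : Dsp n B) := by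
  rw [mu_tau n B hpair p.1 p.2]
  have h1 : cc n B p.1 p.2 = Pi.single (⟨p, hp⟩ : ↥(Spairs n B)) 1 := cc_spair n B hpair hp
  rw [cc_antisymm n B hpair p.1 p.2, sub_neg_eq_add, h1, two_smul]

lemma mu_range_top : LinearMap.range (mu n B hpair) = ⊤ := by
  rw [← top_le_iff, ← (Pi.basisFun ℚ (↥(Spairs n B))).span_eq]
  refine Submodule.span_le.2 ?_
  rintro v ⟨s, rfl⟩
  rw [Pi.basisFun_apply]
  have h1 : Pi.single s (1:ℚ)
      = (2:ℚ)⁻¹ • mu n B hpair ((1:ℚ) ⊗ₜ[ℤ] aM n B s.1.1 s.1.2) := by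
    rw [mu_tau_spair n B hpair s.2, smul_smul]
    norm_num
  rw [h1]
  exact Submodule.smul_mem _ _ (LinearMap.mem_range_self _ _)

lemma finrank_tensor_eq :
    Module.finrank ℚ (ℚ ⊗[ℤ] Mt n B) = (Spairs n B).card := by
  have hfin : Module.Finite ℚ (ℚ ⊗[ℤ] Mt n B) :=
    Module.Finite.of_surjective (theta n B)
      (LinearMap.range_eq_top.1 (theta_range_top n B hpair))
  have hup : Module.finrank ℚ (ℚ ⊗[ℤ] Mt n B) ≤ (Spairs n B).card := by
    calc Module.finrank ℚ (ℚ ⊗[ℤ] Mt n B)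
        = Module.finrank ℚ ↥(⊤ : Submodule ℚ (ℚ ⊗[ℤ] Mt n B)) := (finrank_top ℚ _).symm
      _ = Module.finrank ℚ ↥(LinearMap.range (theta n B)) := by
          rw [theta_range_top n B hpair]
      _ ≤ Module.finrank ℚ (↥(Spairs n B) → ℚ) := LinearMap.finrank_range_le _
      _ = (Spairs n B).card := by
          rw [Module.finrank_fintype_fun_eq_card, Fintype.card_coe]
  have hlo : (Spairs n B).card ≤ Module.finrank ℚ (ℚ ⊗[ℤ] Mt n B) := by
    calc (Spairs n B).card
        = Module.finrank ℚ (Dsp n B) := by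
          rw [Module.finrank_fintype_fun_eq_card, Fintype.card_coe]
      _ = Module.finrank ℚ ↥(⊤ : Submodule ℚ (Dsp n B)) := (finrank_top ℚ _).symm
      _ = Module.finrank ℚ ↥(LinearMap.range (mu n B hpair)) := by
          rw [mu_range_top n B hpair]
      _ ≤ Module.finrank ℚ (ℚ ⊗[ℤ] Mt n B) := LinearMap.finrank_range_le _
  exact le_antisymm hup hlo

end RankSec

end CFAux

namespace CFAux

lemma pair_eq_pair {α : Type*} [LinearOrder α] {a b c d : α} (hab : a < b) (hcd : c < d)
    (h : ({a, b} : Finset α) = {c, d}) : a = c ∧ b = d := by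
  have ha : a ∈ ({c, d} : Finset α) := by
    rw [← h]; exact Finset.mem_insert_self _ _
  have hb : b ∈ ({c, d} : Finset α) := by
    rw [← h]; exact Finset.mem_insert.2 (Or.inr (Finset.mem_singleton_self _))
  have hc : c ∈ ({a, b} : Finset α) := by
    rw [h]; exact Finset.mem_insert_self _ _
  rw [Finset.mem_insert, Finset.mem_singleton] at ha hb hc
  rcases ha with ha | ha
  · subst ha
    rcases hb with hb | hb
    · exact absurd (hb ▸ hab) (lt_irrefl _)
    · exact ⟨rfl, hb⟩
  · subst ha
    rcases hc with hc | hc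
    · exact absurd (hc ▸ hcd) (lt_irrefl _)
    · subst hc
      exact absurd (hab.trans hcd) (lt_irrefl _)

lemma card_filter_lt_product {α : Type*} [LinearOrder α] (s : Finset α) :
    ((s ×ˢ s).filter (fun p => p.1 < p.2)).card = s.card.choose 2 := by
  rw [← Finset.card_powersetCard 2 s]
  apply Finset.card_bij (fun p _ => ({p.1, p.2} : Finset α))
  · intro p hp
    obtain ⟨hmem, hlt⟩ := Finset.mem_filter.1 hp
    obtain ⟨h1, h2⟩ := Finset.mem_product.1 hmem
    rw [Finset.mem_powersetCard]
    constructor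
    · intro x hx
      rw [Finset.mem_insert, Finset.mem_singleton] at hx
      rcases hx with rfl | rfl
      · exact h1
      · exact h2
    · exact Finset.card_pair (ne_of_lt hlt)
  · intro p hp q hq heq
    obtain ⟨-, hltp⟩ := Finset.mem_filter.1 hp
    obtain ⟨-, hltq⟩ := Finset.mem_filter.1 hq
    obtain ⟨e1, e2⟩ := pair_eq_pair hltp hltq heq
    exact Prod.ext e1 e2
  · intro t ht
    obtain ⟨hsub, hcard⟩ := Finset.mem_powersetCard.1 ht
    obtain ⟨x, y, hxy, rfl⟩ := Finset.card_eq_two.1 hcard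
    have hx : x ∈ s := hsub (Finset.mem_insert_self _ _)
    have hy : y ∈ s := hsub (Finset.mem_insert.2 (Or.inr (Finset.mem_singleton_self _)))
    rcases hxy.lt_or_gt with h | h
    · exact ⟨(x, y), Finset.mem_filter.2 ⟨Finset.mem_product.2 ⟨hx, hy⟩, h⟩, rfl⟩
    · exact ⟨(y, x), Finset.mem_filter.2 ⟨Finset.mem_product.2 ⟨hy, hx⟩, h⟩,
        (Finset.pair_comm x y).symm⟩

variable (n : ℕ) (B : Finset (Finset (Fin n)))

def pairsOf (b : Finset (Fin n)) : Finset (Fin n × Fin n) :=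
  Finset.univ.filter (fun p => p.1 < p.2 ∧ p.1 ∈ b ∧ p.2 ∈ b ∧ ∃ m ∈ b, m < p.1)

lemma Spairs_eq_biUnion : Spairs n B = B.biUnion (pairsOf n) := by
  ext p
  simp only [mem_Spairs, pairsOf, Finset.mem_biUnion, Finset.mem_filter, Finset.mem_univ,
    true_and]
  constructor
  · rintro ⟨hlt, b, hb, h1, h2, hm⟩
    exact ⟨b, hb, hlt, h1, h2, hm⟩
  · rintro ⟨b, hb, hlt, h1, h2, hm⟩
    exact ⟨hlt, b, hb, h1, h2, hm⟩

lemma card_pairsOf {b : Finset (Fin n)} (hb2 : 2 ≤ b.card) :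
    (pairsOf n b).card = (b.card - 1).choose 2 := by
  have hne : b.Nonempty := Finset.card_pos.1 (by omega)
  set m := b.min' hne with hm
  have hmb : m ∈ b := b.min'_mem hne
  have key : pairsOf n b = ((b.erase m) ×ˢ (b.erase m)).filter (fun p => p.1 < p.2) := by
    ext p
    simp only [pairsOf, Finset.mem_filter, Finset.mem_univ, true_and, Finset.mem_product,
      Finset.mem_erase]
    constructor
    · rintro ⟨hlt, h1, h2, w, hw, hwlt⟩
      refine ⟨⟨⟨?_, h1⟩, ⟨?_, h2⟩⟩, hlt⟩
      · intro h
        rw [h] at hwlt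
        exact absurd hwlt (not_lt.2 (b.min'_le w hw))
      · intro h
        rw [h] at hlt
        exact absurd (lt_of_le_of_lt (b.min'_le p.1 h1) hlt) (lt_irrefl _)
    · rintro ⟨⟨⟨hne1, h1⟩, ⟨hne2, h2⟩⟩, hlt⟩
      exact ⟨hlt, h1, h2, m, hmb, lt_of_le_of_ne (b.min'_le p.1 h1) (Ne.symm hne1)⟩
  rw [key, card_filter_lt_product, Finset.card_erase_of_mem hmb]

lemma card_Spairs (hpair : ∀ i j : Fin n, i ≠ j → ∃! b, b ∈ B ∧ i ∈ b ∧ j ∈ b)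
    (hcard : ∀ b ∈ B, 2 ≤ b.card) :
    (Spairs n B).card = ∑ b ∈ B, (b.card - 1).choose 2 := by
  rw [Spairs_eq_biUnion, Finset.card_biUnion]
  · exact Finset.sum_congr rfl fun b hb => card_pairsOf n (hcard b hb)
  · intro b hb b' hb' hne
    rw [Function.onFun, Finset.disjoint_left]
    intro p hp hp'
    simp only [pairsOf, Finset.mem_filter, Finset.mem_univ, true_and] at hp hp'
    obtain ⟨hlt, h1, h2, -⟩ := hp
    obtain ⟨-, h1', h2', -⟩ := hp'
    obtain ⟨bu, -, huniq⟩ := hpair p.1 p.2 (ne_of_lt hlt)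
    exact hne ((huniq b ⟨hb, h1, h2⟩).trans (huniq b' ⟨hb', h1', h2'⟩).symm)

end CFAux


/-- For the conjugation-free group `G = G(ℬ)` associated to a family `ℬ` of blocks of
size ≥ 2 in which every pair of distinct indices lies in exactly one block,
`φ₂(G) = Σ_{b ∈ ℬ} C(|b|−1, 2)` (equivalently `Σ_{i≥3} n_i · ω₂(i−1)`, since blocks
of size 2 contribute `C(1,2) = 0`). -/
theorem phi_two_of_conjugationFree (n : ℕ) (hn : 1 ≤ n)
    (B : Finset (Finset (Fin n)))
    (hcard : ∀ b ∈ B, 2 ≤ b.card)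
    (hpair : ∀ i j : Fin n, i ≠ j → ∃! b, b ∈ B ∧ i ∈ b ∧ j ∈ b) :
    phiRank (PresentedGroup (cfRelators B)) 2 =
      ∑ b ∈ B, (b.card - 1).choose 2 := by
  have h1 : phiRank (PresentedGroup (cfRelators B)) 2
      = Module.finrank ℚ (ℚ ⊗[ℤ] CFAux.Mt n B) := rfl
  rw [h1, CFAux.finrank_tensor_eq n B hpair, CFAux.card_Spairs n B hpair hcard]
end
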